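/- arXiv:1807.02491 — 4 statements merged into one kernel-verified Lean document; each statement's English description precedes it below -/
import Mathlib

section
/- Let A be a skew PBW extension of a ring R with variables x_1, …, x_n. Then for every 1 ≤ i ≤ n there exist an injective ring endomorphism σ_i : R → R and a σ_i-derivation δ_i : R → R (an additive map satisfying δ_i(rs) = σ_i(r)δ_i(s) + δ_i(r)s for all r, s ∈ R) such that x_i r = σ_i(r) x_i + δ_i(r) for every r ∈ R. -/
/-!
The monomials `x^0 = 1` and `x^{eᵢ} = xᵢ` are part of a left `R`-basis of `A`, so a
relation `xᵢ r = c xᵢ + s` determines `c` and `s`; relation (iii) of the definition provides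
one, and we call its coefficients `σ r` and `δ r`. Comparing coefficients in `xᵢ (r + s)`,
`xᵢ 1` and `xᵢ (r s) = (xᵢ r) s` makes `σ` a ring endomorphism and `δ` a `σ`-derivation, and
`σ r = c ≠ 0` for `r ≠ 0` makes `σ` injective.
-/

/-- The standard monomial `x^α = x₁^{α₁} ⋯ xₙ^{αₙ}` (ordered product). -/
def stdMon {A : Type*} [Ring A] {n : ℕ} (x : Fin n → A) (α : Fin n → ℕ) : A :=
  (List.ofFn fun i => x i ^ α i).prod

/-- `A` is a skew PBW extension of `R` (embedded via `φ`) with variables `x₁,…,xₙ`: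
`φ` is injective, `A` is a free left `R`-module with basis the standard monomials,
and the relations (iii) and (iv) of the definition hold. -/
def IsSkewPBWExt {R A : Type*} [Ring R] [Ring A] {n : ℕ} (φ : R →+* A) (x : Fin n → A) :
    Prop :=
  Function.Injective φ ∧
  (letI : Module R A := Module.compHom A φ;
    LinearIndependent R (stdMon x) ∧
      Submodule.span R (Set.range (stdMon x)) = (⊤ : Submodule R A)) ∧
  (∀ i : Fin n, ∀ r : R, r ≠ 0 → ∃ c : R, c ≠ 0 ∧ ∃ s : R,
      x i * φ r - φ c * x i = φ s) ∧
  (∀ i j : Fin n, ∃ c : R, c ≠ 0 ∧ ∃ s : R, ∃ t : Fin n → R,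
      x j * x i - φ c * (x i * x j) = φ s + ∑ k, φ (t k) * x k)

section SkewDerivation

variable {R A : Type*} [Ring R] [Ring A] (φ : R →+* A) {y : A}

theorem exists_ringHom_and_twistedDerivation_of_mul_eq
    (hy : ∀ a b a' b' : R, φ a * y + φ b = φ a' * y + φ b' → a = a' ∧ b = b')
    (hex : ∀ r : R, ∃ a b : R, y * φ r = φ a * y + φ b) :
    ∃ σ : R →+* R, ∃ δ : R →+ R, (∀ r s : R, δ (r * s) = σ r * δ s + δ r * s) ∧
      ∀ r : R, y * φ r = φ (σ r) * y + φ (δ r) := by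
  choose σ δ hσδ using hex
  have hone : σ 1 = 1 ∧ δ 1 = 0 := hy _ _ _ _ (by rw [← hσδ]; simp)
  have hadd (r s : R) : σ (r + s) = σ r + σ s ∧ δ (r + s) = δ r + δ s :=
    hy _ _ _ _ (by
      rw [← hσδ, map_add, mul_add, hσδ, hσδ]
      simp only [map_add]
      noncomm_ring)
  have hmul (r s : R) : σ (r * s) = σ r * σ s ∧ δ (r * s) = σ r * δ s + δ r * s :=
    hy _ _ _ _ (by
      rw [← hσδ, map_mul, ← mul_assoc, hσδ, add_mul, mul_assoc, hσδ]
      simp only [map_mul, map_add]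
      noncomm_ring)
  exact ⟨RingHom.mk' ⟨⟨σ, hone.1⟩, fun r s => (hmul r s).1⟩ fun r s => (hadd r s).1,
    AddMonoidHom.mk' δ fun r s => (hadd r s).2, fun r s => (hmul r s).2, hσδ⟩

theorem injective_of_mul_eq
    (hy : ∀ a b a' b' : R, φ a * y + φ b = φ a' * y + φ b' → a = a' ∧ b = b')
    (hc : ∀ r : R, r ≠ 0 → ∃ c : R, c ≠ 0 ∧ ∃ s : R, y * φ r - φ c * y = φ s)
    {σ : R →+* R} {δ : R → R} (hσδ : ∀ r : R, y * φ r = φ (σ r) * y + φ (δ r)) :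
    Function.Injective σ := by
  refine (injective_iff_map_eq_zero σ).2 fun r hr => by_contra fun hr0 => ?_
  obtain ⟨c, hc0, s, hs⟩ := hc r hr0
  have hσc : σ r = c ∧ δ r = s := hy _ _ _ _ (by rw [← hσδ, ← hs]; abel)
  exact hc0 (hσc.1 ▸ hr)

end SkewDerivation

lemma stdMon_zero {A : Type*} [Ring A] {n : ℕ} (x : Fin n → A) : stdMon x 0 = 1 := by
  simp [stdMon]

lemma stdMon_single {A : Type*} [Ring A] {n : ℕ} (x : Fin n → A) (i : Fin n) :
    stdMon x (Pi.single i 1) = x i := by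
  classical
  rw [stdMon, List.ofFn_eq_map, List.prod_map_eq_pow_single i _ fun j hj _ => by simp [hj]]
  simp

namespace IsSkewPBWExt

variable {R A : Type*} [Ring R] [Ring A] {n : ℕ} {φ : R →+* A} {x : Fin n → A}

lemma eq_of_mul_add_eq (h : IsSkewPBWExt φ x) (i : Fin n) (a b a' b' : R)
    (hab : φ a * x i + φ b = φ a' * x i + φ b') : a = a' ∧ b = b' := by
  let _ : Module R A := Module.compHom A φ
  have hinj : Function.Injective ![(0 : Fin n → ℕ), Pi.single i 1] :=
    injective_pair_iff_ne.2 fun h0 => by simpa using congrFun h0 i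
  have hcomp : stdMon x ∘ ![0, Pi.single i 1] = ![1, x i] := by
    ext j
    fin_cases j <;> simp [stdMon_zero, stdMon_single]
  have hli : LinearIndependent R ![1, x i] := hcomp ▸ h.2.1.1.comp _ hinj
  refine (hli.eq_of_pair (s := b) (t := a) (s' := b') (t' := a') ?_).symm
  change φ b * 1 + φ a * x i = φ b' * 1 + φ a' * x i
  rw [mul_one, mul_one, add_comm, hab, add_comm]

lemma exists_mul_eq (h : IsSkewPBWExt φ x) (i : Fin n) (r : R) :
    ∃ a b : R, x i * φ r = φ a * x i + φ b := by
  obtain rfl | hr := eq_or_ne r 0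
  · exact ⟨0, 0, by simp⟩
  · obtain ⟨c, -, s, hs⟩ := h.2.2.1 i r hr
    exact ⟨c, s, by rw [← hs]; abel⟩

end IsSkewPBWExt

/-- Proposition: a skew PBW extension induces, for each `i`, an injective ring
endomorphism `σᵢ` of `R` and a `σᵢ`-derivation `δᵢ` with `xᵢ r = σᵢ(r) xᵢ + δᵢ(r)`. -/
theorem stmt2 {R A : Type*} [Ring R] [Ring A] {n : ℕ} (φ : R →+* A) (x : Fin n → A)
    (h : IsSkewPBWExt φ x) :
    ∀ i : Fin n, ∃ σ : R →+* R, Function.Injective σ ∧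
      ∃ δ : R →+ R, (∀ r s : R, δ (r * s) = σ r * δ s + δ r * s) ∧
        ∀ r : R, x i * φ r = φ (σ r) * x i + φ (δ r) := by
  intro i
  have hy := h.eq_of_mul_add_eq i
  obtain ⟨σ, δ, hδ, hσδ⟩ :=
    exists_ringHom_and_twistedDerivation_of_mul_eq φ hy (h.exists_mul_eq i)
  exact ⟨σ, injective_of_mul_eq φ hy (h.2.2.1 i) hσδ, δ, hδ, hσδ⟩
end

section
/- Let A be a K-algebra over a field K admitting two graduations A = ⊕_{n≥0} A_n = ⊕_{n≥0} B_n, each of which makes A a connected ℕ-graded K-algebra finitely generated in degree 1. Then there exists a K-algebra automorphism φ : A → A such that φ(A_n) = B_n for every n ≥ 0; in particular, dim_K A_n = dim_K B_n for every n ≥ 0. -/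
/-- A connected ℕ-graded `K`-algebra finitely generated in degree 1. -/
structure ConnGradedAlg (K : Type*) [Field K] (A : Type*) [Ring A] [Algebra K A] where
  /-- the graduation -/
  gr : ℕ → Submodule K A
  /-- `A = ⊕_{n≥0} A_n` internally -/
  internal : DirectSum.IsInternal gr
  /-- `A_m · A_n ⊆ A_{m+n}` -/
  mul_mem : ∀ m n : ℕ, ∀ a ∈ gr m, ∀ b ∈ gr n, a * b ∈ gr (m + n)
  /-- connected: `A_0 = K·1` -/
  grade_zero : gr 0 = (1 : Submodule K A)
  /-- `A_1` is finite dimensional over `K` -/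
  finiteDimOne : FiniteDimensional K (gr 1)
  /-- `A` is generated in degree 1 -/
  gen : Algebra.adjoin K (gr 1 : Set A) = ⊤

/-!
For a grading `G` write `G_{<n}` and `G_{≥n}` for the sums of its components of degree `< n` and
`≥ n`. Since `A` is generated by `G_1` and `H_0 = K`, every `G_m` lies in `G_{<m} + H_{≥m}`, hence
`A = G_{<n} + H_{≥n}` for every `n`. Then `A / H_{≥n} ≅ H_{<n}` is a quotient of `G_{<n}`;
comparing dimensions both ways gives `dim G_{<n} = dim H_{<n}`, so the sum is direct.
The projection `τ_n` of `A` onto `H_{≥n}` along `G_{<n}` satisfies `τ(ab) = τ(a) τ(b)` for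
`a ∈ G_m`, `b ∈ G_n`, so the `H`-degree-`n` component of `τ_n`, restricted to `G_n`, is
multiplicative. It is injective, hence bijective onto `H_n`, and these maps assemble into the
required automorphism.
-/

open DirectSum

namespace Submodule

variable {K E : Type*} [DivisionRing K] [AddCommGroup E] [Module K E] {p p' q : Submodule K E}

theorem surjective_mkQ_comp_subtype (h : Codisjoint p q) :
    Function.Surjective (q.mkQ ∘ₗ p.subtype) := by
  rw [← LinearMap.range_eq_top, LinearMap.range_comp, range_subtype, map_mkQ_eq_top, sup_comm]
  exact h.eq_top

theorem finrank_le_of_codisjoint_of_isCompl [FiniteDimensional K p] (hpq : Codisjoint p q)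
    (hp'q : IsCompl p' q) : Module.finrank K p' ≤ Module.finrank K p :=
  (quotientEquivOfIsCompl q p' hp'q.symm).finrank_eq ▸
    LinearMap.finrank_le_finrank_of_surjective (surjective_mkQ_comp_subtype hpq)

theorem isCompl_of_codisjoint_of_finrank_le [FiniteDimensional K p] (hpq : Codisjoint p q)
    (hp'q : IsCompl p' q) (h : Module.finrank K p ≤ Module.finrank K p') : IsCompl p q := by
  have hsurj := surjective_mkQ_comp_subtype hpq
  have : FiniteDimensional K (E ⧸ q) := Module.Finite.of_surjective _ hsurj
  have hfinrank : Module.finrank K p = Module.finrank K (E ⧸ q) := by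
    rw [(quotientEquivOfIsCompl q p' hp'q.symm).finrank_eq]
    exact le_antisymm h (finrank_le_of_codisjoint_of_isCompl hpq hp'q)
  have hinj := (LinearMap.injective_iff_surjective_of_finrank_eq_finrank hfinrank).mpr hsurj
  refine ⟨disjoint_iff_comap_eq_bot.mpr ?_, hpq⟩
  rw [← ker_mkQ q, ← LinearMap.ker_comp]
  exact LinearMap.ker_eq_bot.mpr hinj

end Submodule

theorem Submodule.iSup_pow_eq_top_of_adjoin_eq_top {R A : Type*} [CommSemiring R] [Semiring A]
    [Algebra R A] {M : Submodule R A} (h : Algebra.adjoin R (M : Set A) = ⊤) :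
    ⨆ i : ℕ, M ^ i = ⊤ := by
  have : Algebra.adjoin R (M : Set A) ≤ (coeAlgHom fun i : ℕ => M ^ i).range :=
    Algebra.adjoin_le fun y hy => by
      have : y ∈ ⨆ i : ℕ, M ^ i := Submodule.mem_iSup_of_mem 1 (by rwa [pow_one])
      rwa [Submodule.iSup_eq_toSubmodule_range] at this
  rw [h, top_le_iff] at this
  rw [Submodule.iSup_eq_toSubmodule_range, this, Algebra.top_toSubmodule]

namespace GradedAlgebra

section

variable {ι R A : Type*} [DecidableEq ι] [AddMonoid ι] [CommSemiring R] [Semiring A]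
  [Algebra R A] (𝒜 : ι → Submodule R A) [GradedAlgebra 𝒜]

theorem mem_biSup_iff {s : Set ι} {x : A} :
    x ∈ ⨆ i ∈ s, 𝒜 i ↔ ∀ j ∉ s, proj 𝒜 j x = 0 := by
  classical
  constructor
  · intro hx j hj
    have : ⨆ i ∈ s, 𝒜 i ≤ LinearMap.ker (proj 𝒜 j) := iSup₂_le fun i hi y hy => by
      simp [decompose_of_mem_ne 𝒜 hy (ne_of_mem_of_not_mem hi hj)]
    exact this hx
  · intro h
    rw [← sum_support_decompose 𝒜 x]
    refine Submodule.sum_mem _ fun i _ => ?_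
    by_cases hi : i ∈ s
    · exact (le_biSup 𝒜 hi) (decompose 𝒜 x i).2
    · rw [← proj_apply, h i hi]
      exact zero_mem _

end

section Nat

variable {R A : Type*} [CommSemiring R] [Semiring A] [Algebra R A] (𝒜 : ℕ → Submodule R A)

def degreeLT (n : ℕ) : Submodule R A := ⨆ i ∈ Set.Iio n, 𝒜 i

def degreeGE (n : ℕ) : Submodule R A := ⨆ i ∈ Set.Ici n, 𝒜 i

variable {𝒜} {m n : ℕ}

theorem le_degreeLT (h : m < n) : 𝒜 m ≤ degreeLT 𝒜 n := le_biSup 𝒜 h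

theorem le_degreeGE (h : n ≤ m) : 𝒜 m ≤ degreeGE 𝒜 n := le_biSup 𝒜 h

theorem degreeLT_mono : Monotone (degreeLT 𝒜) := fun _ _ h =>
  biSup_mono fun _ hi => lt_of_lt_of_le hi h

theorem degreeGE_antitone : Antitone (degreeGE 𝒜) := fun _ _ h =>
  biSup_mono fun _ hi => le_trans h hi

theorem degreeLT_zero : degreeLT 𝒜 0 = ⊥ := by
  simp [degreeLT]

theorem degreeLT_one : degreeLT 𝒜 1 = 𝒜 0 := by
  simp [degreeLT]

theorem degreeLT_succ : degreeLT 𝒜 (n + 1) = degreeLT 𝒜 n ⊔ 𝒜 n := by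
  rw [degreeLT, degreeLT, ← Order.succ_eq_add_one, Order.Iio_succ_eq_insert, iSup_insert,
    sup_comm]

variable [GradedAlgebra 𝒜]

theorem mem_degreeGE_iff {x : A} : x ∈ degreeGE 𝒜 n ↔ ∀ i < n, proj 𝒜 i x = 0 := by
  rw [degreeGE, mem_biSup_iff]
  simp only [Set.mem_Ici, not_le]

theorem degreeGE_zero : degreeGE 𝒜 0 = ⊤ := by
  simp [degreeGE, (Decomposition.isInternal 𝒜).submodule_iSup_eq_top]

theorem disjoint_degreeLT_gr : Disjoint (degreeLT 𝒜 n) (𝒜 n) :=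
  ((Decomposition.isInternal 𝒜).submodule_iSupIndep.disjoint_biSup Set.self_notMem_Iio).symm

theorem gr_mul_gr_le (m n : ℕ) : 𝒜 m * 𝒜 n ≤ 𝒜 (m + n) :=
  Submodule.mul_le.mpr fun _ ha _ hb => SetLike.mul_mem_graded ha hb

theorem degreeLT_mul_degreeLT_le {k : ℕ} (h : m + n ≤ k + 1) :
    degreeLT 𝒜 m * degreeLT 𝒜 n ≤ degreeLT 𝒜 k := by
  simp only [degreeLT, Submodule.iSup_mul, Submodule.mul_iSup]
  refine iSup₂_le fun j hj => iSup₂_le fun i hi => (gr_mul_gr_le i j).trans (le_degreeLT ?_)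
  rw [Set.mem_Iio] at hi hj
  omega

theorem degreeGE_mul_degreeGE_le : degreeGE 𝒜 m * degreeGE 𝒜 n ≤ degreeGE 𝒜 (m + n) := by
  simp only [degreeGE, Submodule.iSup_mul, Submodule.mul_iSup]
  refine iSup₂_le fun j hj => iSup₂_le fun i hi => (gr_mul_gr_le i j).trans (le_degreeGE ?_)
  rw [Set.mem_Ici] at hi hj
  omega

theorem proj_add_mul_of_mem_degreeGE {a b : A} (ha : a ∈ degreeGE 𝒜 m) (hb : b ∈ degreeGE 𝒜 n) :
    proj 𝒜 (m + n) (a * b) = proj 𝒜 m a * proj 𝒜 n b := by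
  rw [proj_apply, decompose_mul, coe_mul_apply_eq_sum_antidiagonal,
    Finset.sum_eq_single_of_mem (m, n) (by simp)]
  · rfl
  rintro ⟨i, j⟩ hij hne
  rw [Finset.HasAntidiagonal.mem_antidiagonal] at hij
  rcases Nat.lt_or_ge i m with hi | hi
  · rw [← proj_apply, mem_degreeGE_iff.mp ha i hi, zero_mul]
  · have hj : j < n := by
      by_contra hj
      exact hne (Prod.ext (by omega) (by omega))
    rw [← proj_apply, ← proj_apply, mem_degreeGE_iff.mp hb j hj, mul_zero]

theorem gr_eq_pow_of_adjoin_eq_top (h : Algebra.adjoin R (𝒜 1 : Set A) = ⊤) (n : ℕ) :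
    𝒜 n = 𝒜 1 ^ n := by
  have pow_le : ∀ i, 𝒜 1 ^ i ≤ 𝒜 i := by
    intro i
    induction i with
    | zero => exact Submodule.one_le.mpr SetLike.GradedOne.one_mem
    | succ i ih => exact (mul_le_mul' ih le_rfl).trans (gr_mul_gr_le i 1)
  refine le_antisymm (fun x hx => ?_) (pow_le n)
  suffices ∀ y ∈ ⨆ i, 𝒜 1 ^ i, proj 𝒜 n y ∈ 𝒜 1 ^ n by
    simpa [decompose_of_mem_same 𝒜 hx] using
      this x ((Submodule.iSup_pow_eq_top_of_adjoin_eq_top h).ge trivial)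
  intro y hy
  induction hy using Submodule.iSup_induction' with
  | mem i y hy =>
    obtain rfl | hin := eq_or_ne i n
    · rwa [proj_apply, decompose_of_mem_same 𝒜 (pow_le i hy)]
    · rw [proj_apply, decompose_of_mem_ne 𝒜 (pow_le i hy) hin]
      exact zero_mem _
  | zero => simp
  | add y z _ _ hy hz => rw [map_add]; exact add_mem hy hz

end Nat

theorem isCompl_degreeLT_degreeGE {R A : Type*} [CommRing R] [Ring A] [Algebra R A]
    {𝒜 : ℕ → Submodule R A} [GradedAlgebra 𝒜] {n : ℕ} :
    IsCompl (degreeLT 𝒜 n) (degreeGE 𝒜 n) := by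
  refine ⟨(Decomposition.isInternal 𝒜).submodule_iSupIndep.disjoint_biSup_biSup
    (Set.Iio_disjoint_Ici le_rfl), codisjoint_iff.mpr ?_⟩
  rw [degreeLT, degreeGE, ← iSup_union, Set.Iio_union_Ici, iSup_univ,
    (Decomposition.isInternal 𝒜).submodule_iSup_eq_top]

end GradedAlgebra

namespace ConnGradedAlg

open GradedAlgebra Module

variable {K A : Type*} [Field K] [Ring A] [Algebra K A]

section

variable (G : ConnGradedAlg K A)

noncomputable instance : GradedAlgebra G.gr :=
  { G.internal.chooseDecomposition with
    one_mem := by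
      rw [G.grade_zero]
      exact Submodule.one_le.mp le_rfl
    mul_mem := fun _ _ _ _ ha hb => G.mul_mem _ _ _ ha _ hb }

theorem gr_eq_pow (n : ℕ) : G.gr n = G.gr 1 ^ n :=
  gr_eq_pow_of_adjoin_eq_top G.gen n

instance finiteDimensional_gr (n : ℕ) : FiniteDimensional K (G.gr n) := by
  have := G.finiteDimOne
  rw [← Submodule.fg_iff_finiteDimensional, gr_eq_pow]
  exact ((Submodule.fg_iff_finiteDimensional _).mpr this).pow n

instance finiteDimensional_degreeLT (n : ℕ) : FiniteDimensional K (degreeLT G.gr n) := by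
  induction n with
  | zero => rw [degreeLT_zero]; infer_instance
  | succ n ih => rw [degreeLT_succ]; infer_instance

theorem finrank_degreeLT_succ (n : ℕ) :
    finrank K (degreeLT G.gr (n + 1)) = finrank K (degreeLT G.gr n) + finrank K (G.gr n) := by
  rw [← Submodule.finrank_sup_add_finrank_inf_eq, disjoint_degreeLT_gr.eq_bot, finrank_bot,
    add_zero, degreeLT_succ]

end

variable (G H : ConnGradedAlg K A)

theorem gr_one_le_one_sup : G.gr 1 ≤ 1 ⊔ degreeGE H.gr 1 ⊓ degreeLT G.gr 2 :=
  calc G.gr 1 ≤ degreeLT G.gr 2 := le_degreeLT one_lt_two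
    _ = (H.gr 0 ⊔ degreeGE H.gr 1) ⊓ degreeLT G.gr 2 := by
      rw [← degreeLT_one (𝒜 := H.gr), GradedAlgebra.isCompl_degreeLT_degreeGE.sup_eq_top,
        top_inf_eq]
    _ = 1 ⊔ degreeGE H.gr 1 ⊓ degreeLT G.gr 2 := by
      rw [H.grade_zero]
      exact sup_inf_assoc_of_le _ (G.grade_zero ▸ le_degreeLT two_pos)

theorem gr_le_degreeLT_sup_degreeGE (m : ℕ) : G.gr m ≤ degreeLT G.gr m ⊔ degreeGE H.gr m := by
  induction m with
  | zero => simp [degreeGE_zero]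
  | succ m ih =>
    set D := degreeGE H.gr 1 ⊓ degreeLT G.gr 2
    calc G.gr (m + 1) = G.gr m * G.gr 1 := by rw [gr_eq_pow, gr_eq_pow G m, pow_succ]
      _ ≤ G.gr m * (1 ⊔ D) := mul_le_mul' le_rfl (gr_one_le_one_sup G H)
      _ = G.gr m ⊔ G.gr m * D := by rw [Submodule.mul_sup, mul_one]
      _ ≤ degreeLT G.gr (m + 1) ⊔ (degreeLT G.gr m ⊔ degreeGE H.gr m) * D :=
        sup_le_sup (le_degreeLT m.lt_succ_self) (mul_le_mul' ih le_rfl)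
      _ = degreeLT G.gr (m + 1) ⊔ (degreeLT G.gr m * D ⊔ degreeGE H.gr m * D) := by
        rw [Submodule.sup_mul]
      _ ≤ degreeLT G.gr (m + 1) ⊔ degreeGE H.gr (m + 1) := by
        refine sup_le le_sup_left (sup_le (le_sup_of_le_left ?_) (le_sup_of_le_right ?_))
        · exact (mul_le_mul' le_rfl inf_le_right).trans
            (degreeLT_mul_degreeLT_le (n := 2) (by omega))
        · exact (mul_le_mul' le_rfl inf_le_left).trans degreeGE_mul_degreeGE_le

theorem degreeLT_sup_degreeGE_eq_top (n : ℕ) : degreeLT G.gr n ⊔ degreeGE H.gr n = ⊤ := by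
  have key : ∀ m, G.gr m ≤ degreeLT G.gr n ⊔ degreeGE H.gr n := by
    intro m
    induction m using Nat.strong_induction_on with
    | _ m ih =>
      rcases lt_or_ge m n with hmn | hnm
      · exact le_sup_of_le_left (le_degreeLT hmn)
      · refine (gr_le_degreeLT_sup_degreeGE G H m).trans
          (sup_le (iSup₂_le fun i hi => ih i hi) (le_sup_of_le_right (degreeGE_antitone hnm)))
  rw [eq_top_iff, ← (Decomposition.isInternal G.gr).submodule_iSup_eq_top]
  exact iSup_le key

theorem finrank_degreeLT_le (n : ℕ) : finrank K (degreeLT H.gr n) ≤ finrank K (degreeLT G.gr n) :=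
  Submodule.finrank_le_of_codisjoint_of_isCompl
    (codisjoint_iff.mpr (degreeLT_sup_degreeGE_eq_top G H n)) isCompl_degreeLT_degreeGE

theorem finrank_degreeLT_eq (n : ℕ) : finrank K (degreeLT G.gr n) = finrank K (degreeLT H.gr n) :=
  le_antisymm (finrank_degreeLT_le H G n) (finrank_degreeLT_le G H n)

theorem finrank_gr_eq (n : ℕ) : finrank K (G.gr n) = finrank K (H.gr n) := by
  have h := G.finrank_degreeLT_succ n
  rw [finrank_degreeLT_eq G H, finrank_degreeLT_eq G H, H.finrank_degreeLT_succ] at h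
  omega

theorem isCompl_degreeLT_degreeGE (n : ℕ) : IsCompl (degreeLT G.gr n) (degreeGE H.gr n) :=
  Submodule.isCompl_of_codisjoint_of_finrank_le
    (codisjoint_iff.mpr (degreeLT_sup_degreeGE_eq_top G H n))
    GradedAlgebra.isCompl_degreeLT_degreeGE (finrank_degreeLT_eq G H n).le

noncomputable def projDegreeGE (n : ℕ) : A →ₗ[K] A :=
  (degreeGE H.gr n).projection (degreeLT G.gr n) (isCompl_degreeLT_degreeGE G H n).symm

theorem projDegreeGE_mem (n : ℕ) (x : A) : projDegreeGE G H n x ∈ degreeGE H.gr n :=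
  Submodule.projection_apply_mem _ x

theorem sub_projDegreeGE_mem (n : ℕ) (x : A) : x - projDegreeGE G H n x ∈ degreeLT G.gr n :=
  Submodule.sub_projection_mem _ x

theorem projDegreeGE_eq {n : ℕ} {x s : A} (hs : s ∈ degreeGE H.gr n)
    (hxs : x - s ∈ degreeLT G.gr n) : projDegreeGE G H n x = s := by
  rw [← add_sub_cancel s x, map_add, projDegreeGE, Submodule.projection_apply_of_mem_left _ hs,
    (Submodule.projection_apply_eq_zero_iff _).mpr hxs, add_zero]

theorem projDegreeGE_mul {m n : ℕ} {a b : A} (ha : a ∈ G.gr m) (hb : b ∈ G.gr n) :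
    projDegreeGE G H (m + n) (a * b) = projDegreeGE G H m a * projDegreeGE G H n b := by
  set s := projDegreeGE G H m a
  set t := projDegreeGE G H n b
  refine projDegreeGE_eq G H
    (degreeGE_mul_degreeGE_le (Submodule.mul_mem_mul (projDegreeGE_mem G H m a)
      (projDegreeGE_mem G H n b))) ?_
  have has : a - s ∈ degreeLT G.gr m := sub_projDegreeGE_mem G H m a
  have hbt : b - t ∈ degreeLT G.gr n := sub_projDegreeGE_mem G H n b
  have ha' : a ∈ degreeLT G.gr (m + 1) := le_degreeLT m.lt_succ_self ha
  have hb' : b ∈ degreeLT G.gr (n + 1) := le_degreeLT n.lt_succ_self hb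
  rw [show a * b - s * t = a * (b - t) + (a - s) * b - (a - s) * (b - t) by noncomm_ring]
  refine sub_mem (add_mem ?_ ?_) ?_
  · exact degreeLT_mul_degreeLT_le (by omega) (Submodule.mul_mem_mul ha' hbt)
  · exact degreeLT_mul_degreeLT_le (by omega) (Submodule.mul_mem_mul has hb')
  · exact degreeLT_mul_degreeLT_le (by omega) (Submodule.mul_mem_mul has hbt)

theorem projDegreeGE_one : projDegreeGE G H 0 1 = 1 :=
  projDegreeGE_eq G H (by rw [degreeGE_zero]; exact Submodule.mem_top) (by simp)

noncomputable def comparison (n : ℕ) : G.gr n →ₗ[K] H.gr n :=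
  LinearMap.codRestrict (H.gr n) (proj H.gr n ∘ₗ projDegreeGE G H n ∘ₗ (G.gr n).subtype)
    fun _ => (decompose H.gr _ n).2

theorem comparison_injective (n : ℕ) : Function.Injective (comparison G H n) := by
  rw [← LinearMap.ker_eq_bot, Submodule.eq_bot_iff]
  rintro ⟨a, ha⟩ h0
  set t := projDegreeGE G H n a
  have ht : t ∈ degreeGE H.gr (n + 1) := by
    refine mem_degreeGE_iff.mpr fun i hi => ?_
    obtain hi | rfl := Nat.lt_succ_iff_lt_or_eq.mp hi
    · exact mem_degreeGE_iff.mp (projDegreeGE_mem G H n a) i hi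
    · exact congrArg Subtype.val (LinearMap.mem_ker.mp h0)
  have hat : a - t ∈ degreeLT G.gr n := sub_projDegreeGE_mem G H n a
  have ht' : t ∈ degreeLT G.gr (n + 1) := by
    rw [← sub_sub_cancel a t]
    exact sub_mem (le_degreeLT n.lt_succ_self ha) (degreeLT_mono n.le_succ hat)
  have ht0 : t = 0 := Submodule.disjoint_def.mp (isCompl_degreeLT_degreeGE G H (n + 1)).disjoint
    t ht' ht
  rw [ht0, sub_zero] at hat
  exact Subtype.ext (Submodule.disjoint_def.mp disjoint_degreeLT_gr a hat ha)

theorem comparison_bijective (n : ℕ) : Function.Bijective (comparison G H n) :=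
  ⟨comparison_injective G H n,
    (LinearMap.injective_iff_surjective_of_finrank_eq_finrank (finrank_gr_eq G H n)).mp
      (comparison_injective G H n)⟩

noncomputable def comparisonEquiv (n : ℕ) : G.gr n ≃ₗ[K] H.gr n :=
  LinearEquiv.ofBijective (comparison G H n) (comparison_bijective G H n)

noncomputable def comparisonLinearEquiv : A ≃ₗ[K] A :=
  decomposeLinearEquiv G.gr ≪≫ₗ DFinsupp.mapRange.linearEquiv (comparisonEquiv G H) ≪≫ₗ
    (decomposeLinearEquiv H.gr).symm

theorem comparisonLinearEquiv_apply_of_mem {n : ℕ} {a : A} (ha : a ∈ G.gr n) :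
    comparisonLinearEquiv G H a = proj H.gr n (projDegreeGE G H n a) := by
  have h : DFinsupp.mapRange.linearEquiv (comparisonEquiv G H)
      (lof K ℕ (fun i => G.gr i) n ⟨a, ha⟩) =
      lof K ℕ (fun i => H.gr i) n (comparison G H n ⟨a, ha⟩) :=
    DFinsupp.mapRange_single (hf := fun i => map_zero _)
  rw [comparisonLinearEquiv, LinearEquiv.trans_apply, LinearEquiv.trans_apply,
    show a = ((⟨a, ha⟩ : G.gr n) : A) from rfl, decomposeLinearEquiv_apply_coe, h,
    decomposeLinearEquiv_symm_lof]
  rfl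

theorem comparisonLinearEquiv_mul (x y : A) : comparisonLinearEquiv G H (x * y) =
    comparisonLinearEquiv G H x * comparisonLinearEquiv G H y := by
  induction x using Decomposition.inductionOn G.gr with
  | zero => simp
  | add x x' hx hx' => rw [add_mul, map_add, map_add, hx, hx', add_mul]
  | @homogeneous m a =>
    induction y using Decomposition.inductionOn G.gr with
    | zero => simp
    | add y y' hy hy' => rw [mul_add, map_add, map_add, hy, hy', mul_add]
    | @homogeneous n b =>
      rw [comparisonLinearEquiv_apply_of_mem G H (SetLike.mul_mem_graded a.2 b.2),
        comparisonLinearEquiv_apply_of_mem G H a.2, comparisonLinearEquiv_apply_of_mem G H b.2,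
        projDegreeGE_mul G H a.2 b.2,
        proj_add_mul_of_mem_degreeGE (projDegreeGE_mem G H m a) (projDegreeGE_mem G H n b)]

theorem comparisonLinearEquiv_one : comparisonLinearEquiv G H 1 = 1 := by
  rw [comparisonLinearEquiv_apply_of_mem G H SetLike.GradedOne.one_mem, projDegreeGE_one,
    proj_apply, decompose_of_mem_same H.gr SetLike.GradedOne.one_mem]

noncomputable def comparisonAlgEquiv : A ≃ₐ[K] A :=
  AlgEquiv.ofLinearEquiv (comparisonLinearEquiv G H) (comparisonLinearEquiv_one G H)
    (comparisonLinearEquiv_mul G H)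

theorem map_gr_comparisonAlgEquiv (n : ℕ) :
    (G.gr n).map (comparisonAlgEquiv G H).toLinearMap = H.gr n := by
  ext y
  constructor
  · rintro ⟨x, hx, rfl⟩
    exact (comparisonLinearEquiv_apply_of_mem G H hx).symm ▸ (decompose H.gr _ n).2
  · intro hy
    obtain ⟨x, hx⟩ := (comparison_bijective G H n).2 ⟨y, hy⟩
    exact ⟨x, x.2, (comparisonLinearEquiv_apply_of_mem G H x.2).trans (congrArg Subtype.val hx)⟩

end ConnGradedAlg

/-- Corollary (Bell–Zhang): if a `K`-algebra `A` has two connected graduations finitely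
generated in degree 1, then some algebra automorphism of `A` carries one graduation to the
other; in particular the two graduations have the same Hilbert series. -/
theorem stmt7 {K A : Type*} [Field K] [Ring A] [Algebra K A]
    (G1 G2 : ConnGradedAlg K A) :
    ∃ φ : A ≃ₐ[K] A,
      (∀ n : ℕ, (G1.gr n).map φ.toLinearMap = G2.gr n) ∧
      ∀ n : ℕ, Module.finrank K (G1.gr n) = Module.finrank K (G2.gr n) :=
  ⟨ConnGradedAlg.comparisonAlgEquiv G1 G2, ConnGradedAlg.map_gr_comparisonAlgEquiv G1 G2,
    ConnGradedAlg.finrank_gr_eq G1 G2⟩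
end

section
/- Let V be a vector space over a field K and let X_1, …, X_n be finitely many subspaces of V. The following are equivalent: (i) the collection {X_1, …, X_n} is distributive, i.e. the sublattice of the lattice of subspaces of V (under intersection and sum) generated by X_1, …, X_n is a distributive lattice; (ii) there exists a basis B of V such that each X_i is the linear span of a subset of B; (iii) there exists a basis B of V such that B ∩ X_i is a basis of X_i for every 1 ≤ i ≤ n. -/
/-- Membership in the sublattice generated by a set `X` of elements of a lattice. -/
inductive LatGen {α : Type*} [Lattice α] (X : Set α) : α → Prop
  | base {a : α} : a ∈ X → LatGen X a
  | inf {a b : α} : LatGen X a → LatGen X b → LatGen X (a ⊓ b)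
  | sup {a b : α} : LatGen X a → LatGen X b → LatGen X (a ⊔ b)

/-!
Given a finite distributive lattice `L` of subspaces, choose for every `c ∈ L` an independent
set `comp c` spanning a complement of the join of the members of `L` strictly below `c`. By
well-founded induction on `c`, the union of the `comp a` over `a ∈ L` with `a ≤ c` is a basis
of `c`. The delicate point is that the bases of `a` and of `⨆ g` over a finite family in `L`
join to an independent set: their spans meet in `a ⊓ ⨆ g = ⨆ (a ⊓ g)` by distributivity, and
the basis of each `a ⊓ g` lies in both. The lattice generated by finitely many subspaces is
finite once it is distributive, which settles (i) → (iii). Conversely, subspaces spanned by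
subsets of one independent set form a distributive lattice, because `span` turns `∩` and `∪`
of such subsets into `⊓` and `⊔`.
-/

open Set Submodule

section LinearIndependence

variable {R M : Type*} [Ring R] [AddCommGroup M] [Module R M] {s t u : Set M}

theorem LinearIndepOn.disjoint_span_of_disjoint (hs : LinearIndepOn R id s) (ht : t ⊆ s)
    (hu : u ⊆ s) (htu : Disjoint t u) : Disjoint (span R t) (span R u) :=
  ((linearIndepOn_id_union_iff htu).1 (hs.mono (union_subset ht hu))).2.2

theorem LinearIndepOn.span_inter (hs : LinearIndepOn R id s) (ht : t ⊆ s) (hu : u ⊆ s) :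
    span R (t ∩ u) = span R t ⊓ span R u := by
  refine le_antisymm (le_inf (span_mono inter_subset_left) (span_mono inter_subset_right)) ?_
  rintro x ⟨hxt, hxu⟩
  rw [← inter_union_sdiff t u, span_union] at hxt
  obtain ⟨p, hp, q, hq, rfl⟩ := mem_sup.1 hxt
  have hqu : q ∈ span R u := by
    simpa using sub_mem hxu (span_mono inter_subset_right hp)
  have hq : q = 0 := disjoint_def.1
    (hs.disjoint_span_of_disjoint (sdiff_subset.trans ht) hu disjoint_sdiff_left) q hq hqu
  simpa [hq] using hp

theorem LinearIndepOn.id_union_of_inf_span_le (hs : LinearIndepOn R id s)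
    (ht : LinearIndepOn R id t) (h : span R s ⊓ span R t ≤ span R (s ∩ t)) :
    LinearIndepOn R id (s ∪ t) := by
  rw [← union_sdiff_self]
  refine hs.id_union (ht.mono sdiff_subset) (disjoint_def.2 fun x hxs hxt => ?_)
  have hx : x ∈ span R (s ∩ t) := h ⟨hxs, span_mono sdiff_subset hxt⟩
  exact disjoint_def.1 (ht.disjoint_span_of_disjoint sdiff_subset inter_subset_right
    (disjoint_sdiff_left.mono_right inter_subset_left)) x hxt hx

theorem LinearIndepOn.isSublattice_image_span_powerset (hs : LinearIndepOn R id s) :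
    IsSublattice (span R '' 𝒫 s) where
  supClosed := by
    rintro _ ⟨t, ht, rfl⟩ _ ⟨u, hu, rfl⟩
    exact ⟨t ∪ u, union_subset ht hu, span_union t u⟩
  infClosed := by
    rintro _ ⟨t, ht, rfl⟩ _ ⟨u, hu, rfl⟩
    exact ⟨t ∩ u, inter_subset_left.trans ht, hs.span_inter ht hu⟩

theorem LinearIndepOn.inf_sup_left_of_mem_image_span_powerset (hs : LinearIndepOn R id s)
    {a b c : Submodule R M} (ha : a ∈ span R '' 𝒫 s) (hb : b ∈ span R '' 𝒫 s)
    (hc : c ∈ span R '' 𝒫 s) : a ⊓ (b ⊔ c) = a ⊓ b ⊔ a ⊓ c := by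
  obtain ⟨t, ht, rfl⟩ := ha
  obtain ⟨u, hu, rfl⟩ := hb
  obtain ⟨w, hw, rfl⟩ := hc
  rw [← span_union, ← hs.span_inter ht (union_subset hu hw), inter_union_distrib_left,
    span_union, hs.span_inter ht hu, hs.span_inter ht hw]

end LinearIndependence

theorem exists_linearIndepOn_disjoint_span_sup_eq {K V : Type*} [DivisionRing K]
    [AddCommGroup V] [Module K V] {p q : Submodule K V} (hpq : p ≤ q) :
    ∃ s : Set V, LinearIndepOn K id s ∧ Disjoint (span K s) p ∧ span K s ⊔ p = q := by
  obtain ⟨b, hbp, hb_span, hb⟩ := exists_linearIndependent K (p : Set V)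
  rw [span_eq] at hb_span
  obtain ⟨B, hBq, hbB, hqB, hB⟩ := exists_linearIndepOn_id_extension hb (hbp.trans hpq)
  refine ⟨B \ b, hB.mono sdiff_subset,
    hb_span ▸ hB.disjoint_span_of_disjoint sdiff_subset hbB disjoint_sdiff_left, ?_⟩
  rw [← hb_span, ← span_union, sdiff_union_of_subset hbB]
  exact le_antisymm (span_le.2 hBq) hqB

theorem latGen_iff_mem_latticeClosure {α : Type*} [Lattice α] {X : Set α} {a : α} :
    LatGen X a ↔ a ∈ latticeClosure X := by
  refine ⟨fun h => ?_, fun h => ?_⟩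
  · induction h with
    | base h => exact subset_latticeClosure h
    | inf _ _ iha ihb => exact isSublattice_latticeClosure.infClosed iha ihb
    | sup _ _ iha ihb => exact isSublattice_latticeClosure.supClosed iha ihb
  · exact latticeClosure_min (t := {a | LatGen X a}) (fun _ => LatGen.base)
      ⟨fun _ ha _ hb => ha.sup hb, fun _ ha _ hb => ha.inf hb⟩ h

theorem finite_latticeClosure_of_inf_sup_left {α : Type*} [Lattice α] {s : Set α}
    (hs : s.Finite)
    (hdist : ∀ a ∈ latticeClosure s, ∀ b ∈ latticeClosure s, ∀ c ∈ latticeClosure s,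
      a ⊓ (b ⊔ c) = a ⊓ b ⊔ a ⊓ c) :
    (latticeClosure s).Finite := by
  let _ : Lattice (latticeClosure s) := Subtype.lattice
    (fun _ _ ha hb => isSublattice_latticeClosure.supClosed ha hb)
    (fun _ _ ha hb => isSublattice_latticeClosure.infClosed ha hb)
  let _ : DistribLattice (latticeClosure s) :=
    .ofInfSupLe fun a b c => (hdist a a.2 b b.2 c c.2).le
  have himage : Subtype.val '' latticeClosure (Subtype.val ⁻¹' s : Set (latticeClosure s)) =
      latticeClosure s := by
    rw [image_latticeClosure _ _ (fun _ _ => rfl) (fun _ _ => rfl), Subtype.image_preimage_coe,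
      inter_eq_right.2 subset_latticeClosure]
  rw [← himage]
  exact ((hs.preimage Subtype.val_injective.injOn).latticeClosure).image _

theorem inf_biSup_eq_of_inf_sup_left {α : Type*} [CompleteLattice α] {L : Set α}
    (hsup : SupClosed L) (hdist : ∀ a ∈ L, ∀ b ∈ L, ∀ c ∈ L, a ⊓ (b ⊔ c) = a ⊓ b ⊔ a ⊓ c)
    {a : α} (ha : a ∈ L) {G : Set α} (hG : G.Finite) (hGL : G ⊆ L) :
    a ⊓ ⨆ g ∈ G, g = ⨆ g ∈ G, a ⊓ g := by
  induction G, hG using Set.Finite.induction_on with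
  | empty => simp
  | @insert b G _ hG ih =>
    have hGL' := (subset_insert b G).trans hGL
    rw [iSup_insert, iSup_insert, ← ih hGL']
    rcases G.eq_empty_or_nonempty with rfl | hne
    · simp
    · exact hdist a ha b (hGL (mem_insert b G)) _ (hsup.biSup_mem_of_nonempty hG hne hGL')

section AdaptedBasis

variable {R M : Type*} [Ring R] [AddCommGroup M] [Module R M]
  (L : Set (Submodule R M)) (comp : Submodule R M → Set M)

def predSup (c : Submodule R M) : Submodule R M := ⨆ b ∈ {b ∈ L | b < c}, b

def adaptedSet (c : Submodule R M) : Set M := ⋃ a ∈ {a ∈ L | a ≤ c}, comp a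

variable {L comp}

theorem adaptedSet_mono {c d : Submodule R M} (h : c ≤ d) :
    adaptedSet L comp c ⊆ adaptedSet L comp d :=
  biUnion_subset_biUnion_left fun _ ha => ⟨ha.1, ha.2.trans h⟩

theorem adaptedSet_eq_union {c : Submodule R M} (hc : c ∈ L) :
    adaptedSet L comp c = comp c ∪ ⋃ b ∈ {b ∈ L | b < c}, adaptedSet L comp b := by
  refine subset_antisymm (iUnion₂_subset fun a ⟨haL, hac⟩ => ?_) (union_subset
    (subset_biUnion_of_mem (u := comp) ⟨hc, le_rfl⟩)
    (iUnion₂_subset fun b hb => adaptedSet_mono hb.2.le))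
  rcases hac.eq_or_lt with rfl | hlt
  · exact subset_union_left
  · exact ((subset_biUnion_of_mem (s := {b ∈ L | b ≤ a}) (u := comp) ⟨haL, le_rfl⟩).trans
      (subset_biUnion_of_mem (s := {b ∈ L | b < c}) (u := adaptedSet L comp) ⟨haL, hlt⟩)).trans
      subset_union_right

theorem linearIndepOn_biUnion_adaptedSet (hsup : SupClosed L) (hinf : InfClosed L)
    (hdist : ∀ a ∈ L, ∀ b ∈ L, ∀ c ∈ L, a ⊓ (b ⊔ c) = a ⊓ b ⊔ a ⊓ c)
    {G : Set (Submodule R M)} (hG : G.Finite) (hGL : G ⊆ L)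
    (hbasis : ∀ b ∈ L, ∀ g ∈ G, b ≤ g →
      LinearIndepOn R id (adaptedSet L comp b) ∧ span R (adaptedSet L comp b) = b) :
    LinearIndepOn R id (⋃ g ∈ G, adaptedSet L comp g) := by
  induction G, hG using Set.Finite.induction_on with
  | empty => simp
  | @insert a G _ hG ih =>
    have haL := hGL (mem_insert a G)
    have hGL' := (subset_insert a G).trans hGL
    obtain ⟨ha_ind, ha_span⟩ := hbasis a haL a (mem_insert a G) le_rfl
    have hG_span : span R (⋃ g ∈ G, adaptedSet L comp g) = ⨆ g ∈ G, g := by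
      rw [span_iUnion₂]
      exact biSup_congr fun g hg => (hbasis g (hGL' hg) g (mem_insert_of_mem a hg) le_rfl).2
    rw [biUnion_insert]
    refine ha_ind.id_union_of_inf_span_le
      (ih hGL' fun b hb g hg => hbasis b hb g (mem_insert_of_mem a hg)) ?_
    rw [ha_span, hG_span, inf_biSup_eq_of_inf_sup_left hsup hdist haL hG hGL']
    refine iSup₂_le fun g hg => ?_
    rw [← (hbasis _ (hinf haL (hGL' hg)) a (mem_insert a G) inf_le_left).2]
    exact span_mono (subset_inter (adaptedSet_mono inf_le_left)
      ((adaptedSet_mono inf_le_right).trans (subset_biUnion_of_mem hg)))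

theorem adaptedSet_basis_of_forall_lt (hfin : L.Finite) (hsup : SupClosed L)
    (hinf : InfClosed L) (hdist : ∀ a ∈ L, ∀ b ∈ L, ∀ c ∈ L, a ⊓ (b ⊔ c) = a ⊓ b ⊔ a ⊓ c)
    {c : Submodule R M} (hc : c ∈ L) (hcomp : LinearIndepOn R id (comp c))
    (hcomp_disj : Disjoint (span R (comp c)) (predSup L c))
    (hcomp_sup : span R (comp c) ⊔ predSup L c = c)
    (ih : ∀ b ∈ L, b < c →
      LinearIndepOn R id (adaptedSet L comp b) ∧ span R (adaptedSet L comp b) = b) :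
    LinearIndepOn R id (adaptedSet L comp c) ∧ span R (adaptedSet L comp c) = c := by
  have hbelow_span : span R (⋃ b ∈ {b ∈ L | b < c}, adaptedSet L comp b) = predSup L c := by
    rw [span_iUnion₂]
    exact biSup_congr fun b hb => (ih b hb.1 hb.2).2
  have hbelow_ind : LinearIndepOn R id (⋃ b ∈ {b ∈ L | b < c}, adaptedSet L comp b) :=
    linearIndepOn_biUnion_adaptedSet hsup hinf hdist (hfin.subset (sep_subset _ _))
      (sep_subset _ _) fun b hb _ hg hbg => ih b hb (hbg.trans_lt hg.2)
  rw [adaptedSet_eq_union hc]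
  exact ⟨hcomp.id_union hbelow_ind (hbelow_span ▸ hcomp_disj),
    by rw [span_union, hbelow_span, hcomp_sup]⟩

end AdaptedBasis

theorem exists_linearIndepOn_span_eq_top_span_inter_eq {K V : Type*} [DivisionRing K]
    [AddCommGroup V] [Module K V] {L : Set (Submodule K V)} (hfin : L.Finite)
    (hsup : SupClosed L) (hinf : InfClosed L)
    (hdist : ∀ a ∈ L, ∀ b ∈ L, ∀ c ∈ L, a ⊓ (b ⊔ c) = a ⊓ b ⊔ a ⊓ c) :
    ∃ s : Set V, LinearIndepOn K id s ∧ span K s = ⊤ ∧ ∀ c ∈ L, span K (s ∩ c) = c := by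
  choose comp hcomp hcomp_disj hcomp_sup using fun c : Submodule K V =>
    exists_linearIndepOn_disjoint_span_sup_eq (iSup₂_le fun b hb => hb.2.le : predSup L c ≤ c)
  have hbasis : ∀ c ∈ L,
      LinearIndepOn K id (adaptedSet L comp c) ∧ span K (adaptedSet L comp c) = c :=
    fun c hc => hfin.wellFoundedOn.induction hc fun c hc ih =>
      adaptedSet_basis_of_forall_lt hfin hsup hinf hdist hc (hcomp c) (hcomp_disj c)
        (hcomp_sup c) ih
  set s := ⋃ c ∈ L, adaptedSet L comp c
  have hs : LinearIndepOn K id s := linearIndepOn_biUnion_adaptedSet hsup hinf hdist hfin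
    subset_rfl fun b hb _ _ _ => hbasis b hb
  refine ⟨hs.extend (subset_univ s), hs.linearIndepOn_extend _,
    eq_top_iff.2 fun x _ => hs.subset_span_extend _ (mem_univ x),
    fun c hc => le_antisymm (span_le.2 inter_subset_right) ?_⟩
  conv_lhs => rw [← (hbasis c hc).2]
  exact span_mono (subset_inter ((subset_biUnion_of_mem hc).trans (hs.subset_extend _))
    fun x hx => (hbasis c hc).2 ▸ subset_span hx)

theorem exists_basis_inter_of_latGen_inf_sup_left {K V ι : Type*} [DivisionRing K]
    [AddCommGroup V] [Module K V] [Finite ι] (X : ι → Submodule K V)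
    (hdist : ∀ a b c : Submodule K V,
      LatGen (range X) a → LatGen (range X) b → LatGen (range X) c →
        a ⊓ (b ⊔ c) = a ⊓ b ⊔ a ⊓ c) :
    ∃ s : Set V, LinearIndepOn K id s ∧ span K s = ⊤ ∧
      ∀ i, LinearIndepOn K id (s ∩ X i) ∧ span K (s ∩ X i) = X i := by
  have hdist' : ∀ a ∈ latticeClosure (range X), ∀ b ∈ latticeClosure (range X),
      ∀ c ∈ latticeClosure (range X), a ⊓ (b ⊔ c) = a ⊓ b ⊔ a ⊓ c :=
    fun a ha b hb c hc => hdist a b c (latGen_iff_mem_latticeClosure.2 ha)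
      (latGen_iff_mem_latticeClosure.2 hb) (latGen_iff_mem_latticeClosure.2 hc)
  obtain ⟨s, hs, hs_span, hX⟩ := exists_linearIndepOn_span_eq_top_span_inter_eq
    (finite_latticeClosure_of_inf_sup_left (finite_range X) hdist')
    isSublattice_latticeClosure.supClosed isSublattice_latticeClosure.infClosed hdist'
  exact ⟨s, hs, hs_span, fun i =>
    ⟨hs.mono inter_subset_left, hX _ (subset_latticeClosure (mem_range_self i))⟩⟩

theorem LinearIndepOn.inf_sup_left_of_latGen {R M ι : Type*} [Ring R] [AddCommGroup M]
    [Module R M] {s : Set M} (hs : LinearIndepOn R id s) (X : ι → Submodule R M)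
    (hX : ∀ i, ∃ t ⊆ s, X i = span R t) {a b c : Submodule R M} (ha : LatGen (range X) a)
    (hb : LatGen (range X) b) (hc : LatGen (range X) c) : a ⊓ (b ⊔ c) = a ⊓ b ⊔ a ⊓ c := by
  have hsub : latticeClosure (range X) ⊆ span R '' 𝒫 s :=
    latticeClosure_min (range_subset_iff.2 fun i =>
      let ⟨t, ht, hXt⟩ := hX i; ⟨t, ht, hXt.symm⟩) hs.isSublattice_image_span_powerset
  exact hs.inf_sup_left_of_mem_image_span_powerset (hsub (latGen_iff_mem_latticeClosure.1 ha))
    (hsub (latGen_iff_mem_latticeClosure.1 hb)) (hsub (latGen_iff_mem_latticeClosure.1 hc))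

/-- Proposition: for a finite collection `X₁, …, Xₙ` of subspaces of a vector space `V`,
the following are equivalent:
(i) the sublattice of subspaces generated by the `Xᵢ` (under `∩` and `+`) is distributive;
(ii) there is a basis `s` of `V` such that each `Xᵢ` is spanned by a subset of `s`;
(iii) there is a basis `s` of `V` such that `s ∩ Xᵢ` is a basis of `Xᵢ` for each `i`. -/
theorem stmt15 {K V : Type*} [Field K] [AddCommGroup V] [Module K V]
    {n : ℕ} (X : Fin n → Submodule K V) :
    -- (i) ↔ (ii)
    ((∀ a b c : Submodule K V,
        LatGen (Set.range X) a → LatGen (Set.range X) b → LatGen (Set.range X) c →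
          a ⊓ (b ⊔ c) = (a ⊓ b) ⊔ (a ⊓ c)) ↔
      (∃ s : Set V, LinearIndependent K (Subtype.val : s → V) ∧
        Submodule.span K s = ⊤ ∧
        ∀ i : Fin n, ∃ t : Set V, t ⊆ s ∧ X i = Submodule.span K t)) ∧
    -- (ii) ↔ (iii)
    ((∃ s : Set V, LinearIndependent K (Subtype.val : s → V) ∧
        Submodule.span K s = ⊤ ∧
        ∀ i : Fin n, ∃ t : Set V, t ⊆ s ∧ X i = Submodule.span K t) ↔
      (∃ s : Set V, LinearIndependent K (Subtype.val : s → V) ∧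
        Submodule.span K s = ⊤ ∧
        ∀ i : Fin n,
          LinearIndependent K (Subtype.val : (s ∩ (X i : Set V) : Set V) → V) ∧
          Submodule.span K (s ∩ (X i : Set V)) = X i)) := by
  refine ⟨⟨fun hdist => ?_, ?_⟩, ⟨?_, ?_⟩⟩
  · obtain ⟨s, hs, hs_span, hX⟩ := exists_basis_inter_of_latGen_inf_sup_left X hdist
    exact ⟨s, hs, hs_span, fun i => ⟨_, inter_subset_left, (hX i).2.symm⟩⟩
  · rintro ⟨s, hs, -, hX⟩ a b c
    exact LinearIndepOn.inf_sup_left_of_latGen hs X hX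
  · rintro ⟨s, hs, -, hX⟩
    exact exists_basis_inter_of_latGen_inf_sup_left X fun a b c =>
      LinearIndepOn.inf_sup_left_of_latGen hs X hX
  · rintro ⟨s, hs, hs_span, hX⟩
    exact ⟨s, hs, hs_span, fun i => ⟨_, inter_subset_left, (hX i).2.symm⟩⟩
end

section
/- Let F = K⟨x_1, …, x_n⟩ be the free associative algebra over a field K and let I be a two-sided ideal of F generated by finitely many elements b_1, …, b_m ∈ F_{≥1}. Then for all integers s ≥ 0, g ≥ 1, h ≥ 0 and all j ≥ 2 + s + h, the j-th homogeneous component of the subspace F_{≥1}^s I^g F_{≥1}^h satisfies (F_{≥1}^s I^g F_{≥1}^h)_j = F_s (I^g)_{j−s−h} F_h. -/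
noncomputable section

/-- The sublattice generated by `X` is distributive. -/
def LatDistrib {α : Type*} [Lattice α] (X : Set α) : Prop :=
  ∀ a b c : α, LatGen X a → LatGen X b → LatGen X c →
    a ⊓ (b ⊔ c) = (a ⊓ b) ⊔ (a ⊓ c)

variable (K : Type*) [Field K] (n : ℕ)

/-- The degree-`j` homogeneous component `F_j` of the free algebra
`F = K⟨x₁,…,xₙ⟩`: the span of the words of length `j`. -/
def freeGrade (j : ℕ) : Submodule K (FreeAlgebra K (Fin n)) :=
  (Submodule.span K (Set.range (FreeAlgebra.ι K (X := Fin n)))) ^ j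

/-- `F_{≥1} = ⊕_{j ≥ 1} F_j`. -/
def freePos : Submodule K (FreeAlgebra K (Fin n)) :=
  ⨆ j : ℕ, ⨆ _ : 1 ≤ j, freeGrade K n j

/-- `H_g`: the space of degree-`g` homogeneous components of elements of `H`. -/
def homComp (H : Submodule K (FreeAlgebra K (Fin n))) (g : ℕ) :
    Submodule K (FreeAlgebra K (Fin n)) :=
  Submodule.span K {a | a ∈ freeGrade K n g ∧
    ∃ p ∈ H, p - a ∈ ⨆ j : ℕ, ⨆ _ : j ≠ g, freeGrade K n j}

/-- The two-sided ideal `I = ⟨b_i⟩` of `F`, as a `K`-subspace. -/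
def idealSpan {ι : Type*} (b : ι → FreeAlgebra K (Fin n)) :
    Submodule K (FreeAlgebra K (Fin n)) :=
  Submodule.span K
    {u | ∃ (f g : FreeAlgebra K (Fin n)) (i : ι), u = f * b i * g}

/-- The generators `{F_{≥1}^s I^g F_{≥1}^h}` of the lattice `L(B)`, `B = F/I`. -/
def latLGens {ι : Type*} (b : ι → FreeAlgebra K (Fin n)) :
    Set (Submodule K (FreeAlgebra K (Fin n))) :=
  {U | ∃ s g h : ℕ,
    U = freePos K n ^ s * idealSpan K n b ^ g * freePos K n ^ h}

/-- The generators `{F_s I_g F_h | s+g+h = j, g ≥ 2}` of the lattice `L_j(B)`. -/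
def latJGens {ι : Type*} (b : ι → FreeAlgebra K (Fin n)) (j : ℕ) :
    Set (Submodule K (FreeAlgebra K (Fin n))) :=
  {U | ∃ s g h : ℕ, 2 ≤ g ∧ s + g + h = j ∧
    U = freeGrade K n s * homComp K n (idealSpan K n b) g * freeGrade K n h}

end

/-!
Write `P = F_{≥1}` and `J = I^g`, a two-sided ideal since `g ≥ 1`. As `F` is generated in
degree one, every element of `P^s` lies in `F_s F` and every element of `P^h` in `F F_h`, so
`P^s J P^h = F_s J F_h`. Multiplying by homogeneous elements shifts degree-components, hence
`(F_s J F_h)_{s+d+h} = F_s J_d F_h`.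
-/

open DirectSum GradedAlgebra

section Ring

variable {ι R A : Type*} [DecidableEq ι] [AddMonoid ι] [CommSemiring R] [Ring A]
  [Algebra R A] (𝒜 : ι → Submodule R A) [GradedAlgebra 𝒜]

theorem iSup_ne_le_ker_proj (g : ι) :
    ⨆ j, ⨆ (_ : j ≠ g), 𝒜 j ≤ LinearMap.ker (proj 𝒜 g) :=
  iSup₂_le fun _ hj _ hx => decompose_of_mem_ne 𝒜 hx hj

theorem sub_proj_mem_iSup_ne (g : ι) (x : A) :
    x - proj 𝒜 g x ∈ ⨆ j, ⨆ (_ : j ≠ g), 𝒜 j := by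
  induction x using DirectSum.Decomposition.inductionOn 𝒜 with
  | zero => simp
  | @homogeneous i x =>
    rw [proj_apply]
    by_cases hi : i = g
    · subst hi
      rw [decompose_of_mem_same 𝒜 x.2, sub_self]
      exact zero_mem _
    · rw [decompose_of_mem_ne 𝒜 x.2 hi, sub_zero]
      exact Submodule.mem_iSup_of_mem i (Submodule.mem_iSup_of_mem hi x.2)
  | add x y hx hy =>
    rw [map_add, add_sub_add_comm]
    exact add_mem hx hy

theorem span_homogeneousComponents_eq_map_proj (H : Submodule R A) (g : ι) :
    Submodule.span R {a | a ∈ 𝒜 g ∧ ∃ p ∈ H, p - a ∈ ⨆ j, ⨆ (_ : j ≠ g), 𝒜 j} =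
      H.map (proj 𝒜 g) := by
  suffices {a | a ∈ 𝒜 g ∧ ∃ p ∈ H, p - a ∈ ⨆ j, ⨆ (_ : j ≠ g), 𝒜 j} = proj 𝒜 g '' H by
    rw [this, Submodule.span_image, Submodule.span_eq]
  ext a
  constructor
  · rintro ⟨ha, p, hp, hpa⟩
    refine ⟨p, hp, ?_⟩
    rw [← sub_add_cancel p a, map_add, iSup_ne_le_ker_proj 𝒜 g hpa, zero_add, proj_apply,
      decompose_of_mem_same 𝒜 ha]
  · rintro ⟨p, hp, rfl⟩
    exact ⟨SetLike.coe_mem _, p, hp, sub_proj_mem_iSup_ne 𝒜 g p⟩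

end Ring

section Semiring

variable {ι R A : Type*} [DecidableEq ι] [CommSemiring R] [Semiring A]
  [Algebra R A] (𝒜 : ι → Submodule R A)

theorem map_proj_mul_left [AddLeftCancelMonoid ι] [GradedAlgebra 𝒜] (M : Submodule R A)
    (s d : ι) : (𝒜 s * M).map (proj 𝒜 (s + d)) = 𝒜 s * M.map (proj 𝒜 d) := by
  refine le_antisymm (Submodule.map_le_iff_le_comap.2 <| Submodule.mul_le.2 fun x hx p hp => ?_)
    (Submodule.mul_le.2 fun x hx _ ⟨p, hp, hpq⟩ => ⟨x * p, Submodule.mul_mem_mul hx hp, ?_⟩)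
  · rw [Submodule.mem_comap, proj_apply, coe_decompose_mul_add_of_left_mem 𝒜 hx]
    exact Submodule.mul_mem_mul hx (Submodule.mem_map_of_mem hp)
  · rw [← hpq, proj_apply, coe_decompose_mul_add_of_left_mem 𝒜 hx, proj_apply]

theorem map_proj_mul_right [AddRightCancelMonoid ι] [GradedAlgebra 𝒜] (M : Submodule R A)
    (d h : ι) : (M * 𝒜 h).map (proj 𝒜 (d + h)) = M.map (proj 𝒜 d) * 𝒜 h := by
  refine le_antisymm (Submodule.map_le_iff_le_comap.2 <| Submodule.mul_le.2 fun p hp x hx => ?_)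
    (Submodule.mul_le.2 fun _ ⟨p, hp, hpq⟩ x hx => ⟨p * x, Submodule.mul_mem_mul hp hx, ?_⟩)
  · rw [Submodule.mem_comap, proj_apply, coe_decompose_mul_add_of_right_mem 𝒜 hx]
    exact Submodule.mul_mem_mul (Submodule.mem_map_of_mem hp) hx
  · rw [← hpq, proj_apply, coe_decompose_mul_add_of_right_mem 𝒜 hx, proj_apply]

end Semiring

section NatGraded

variable {R A : Type*} [CommSemiring R] [Semiring A] [Algebra R A] (𝒜 : ℕ → Submodule R A)

def gradeGE (s : ℕ) : Submodule R A := ⨆ k, ⨆ (_ : s ≤ k), 𝒜 k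

variable {𝒜}

theorem le_gradeGE {s k : ℕ} (h : s ≤ k) : 𝒜 k ≤ gradeGE 𝒜 s :=
  le_iSup₂_of_le (f := fun k (_ : s ≤ k) => 𝒜 k) k h le_rfl

theorem gradeGE_mul_gradeGE_le [SetLike.GradedMonoid 𝒜] (s t : ℕ) :
    gradeGE 𝒜 s * gradeGE 𝒜 t ≤ gradeGE 𝒜 (s + t) := by
  simp only [gradeGE, Submodule.iSup_mul, Submodule.mul_iSup]
  refine iSup₂_le fun l hl => iSup₂_le fun k hk => ?_
  exact (Submodule.mul_le.2 fun x hx y hy => SetLike.mul_mem_graded hx hy).trans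
    (le_gradeGE (add_le_add hk hl))

theorem gradeGE_one_pow_le [SetLike.GradedMonoid 𝒜] (s : ℕ) : gradeGE 𝒜 1 ^ s ≤ gradeGE 𝒜 s := by
  induction s with
  | zero =>
    rw [pow_zero, Submodule.one_le]
    exact le_gradeGE le_rfl SetLike.GradedOne.one_mem
  | succ s ih => exact (mul_le_mul' ih le_rfl).trans (gradeGE_mul_gradeGE_le s 1)

section GeneratedInDegreeOne

variable (h𝒜 : ∀ i, 𝒜 i = 𝒜 1 ^ i)
include h𝒜

theorem le_gradeGE_one_pow (s : ℕ) : 𝒜 s ≤ gradeGE 𝒜 1 ^ s :=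
  h𝒜 s ▸ pow_le_pow_left' (le_gradeGE le_rfl) s

theorem gradeGE_le_mul_top (s : ℕ) : gradeGE 𝒜 s ≤ 𝒜 s * ⊤ := by
  refine iSup₂_le fun k hk => ?_
  obtain ⟨t, rfl⟩ := Nat.exists_eq_add_of_le hk
  rw [h𝒜, pow_add, ← h𝒜]
  exact mul_le_mul' le_rfl le_top

theorem gradeGE_le_top_mul (s : ℕ) : gradeGE 𝒜 s ≤ ⊤ * 𝒜 s := by
  refine iSup₂_le fun k hk => ?_
  obtain ⟨t, rfl⟩ := Nat.exists_eq_add_of_le' hk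
  rw [h𝒜, pow_add, ← h𝒜 s]
  exact mul_le_mul' le_top le_rfl

theorem gradeGE_one_pow_mul_mul_pow_eq {J : Submodule R A} (hl : ⊤ * J ≤ J) (hr : J * ⊤ ≤ J)
    [SetLike.GradedMonoid 𝒜] (s h : ℕ) :
    gradeGE 𝒜 1 ^ s * J * gradeGE 𝒜 1 ^ h = 𝒜 s * J * 𝒜 h := by
  refine le_antisymm ?_ (mul_le_mul' (mul_le_mul' (le_gradeGE_one_pow h𝒜 s) le_rfl)
    (le_gradeGE_one_pow h𝒜 h))
  calc gradeGE 𝒜 1 ^ s * J * gradeGE 𝒜 1 ^ h ≤ 𝒜 s * ⊤ * J * (⊤ * 𝒜 h) :=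
        mul_le_mul' (mul_le_mul' ((gradeGE_one_pow_le s).trans (gradeGE_le_mul_top h𝒜 s)) le_rfl)
          ((gradeGE_one_pow_le h).trans (gradeGE_le_top_mul h𝒜 h))
    _ = 𝒜 s * (⊤ * J * ⊤) * 𝒜 h := by simp only [mul_assoc]
    _ ≤ 𝒜 s * J * 𝒜 h := by gcongr; exact (mul_le_mul' hl le_rfl).trans hr

end GeneratedInDegreeOne

end NatGraded

theorem Submodule.top_mul_pow_le {R A : Type*} [CommSemiring R] [Semiring A] [Algebra R A]
    {J : Submodule R A} (hJ : ⊤ * J ≤ J) {g : ℕ} (hg : g ≠ 0) : ⊤ * J ^ g ≤ J ^ g := by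
  obtain ⟨g, rfl⟩ := Nat.exists_eq_succ_of_ne_zero hg
  rw [pow_succ', ← mul_assoc]
  exact mul_le_mul' hJ le_rfl

theorem Submodule.pow_mul_top_le {R A : Type*} [CommSemiring R] [Semiring A] [Algebra R A]
    {J : Submodule R A} (hJ : J * ⊤ ≤ J) {g : ℕ} (hg : g ≠ 0) : J ^ g * ⊤ ≤ J ^ g := by
  obtain ⟨g, rfl⟩ := Nat.exists_eq_succ_of_ne_zero hg
  rw [pow_succ, mul_assoc]
  exact mul_le_mul' le_rfl hJ

section FreeAlgebra

variable (K : Type*) [Field K] (n : ℕ)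

theorem freeGrade_eq_pow (i : ℕ) : freeGrade K n i = freeGrade K n 1 ^ i := by
  simp only [freeGrade, pow_one]

theorem freePos_eq_gradeGE : freePos K n = gradeGE (freeGrade K n) 1 := rfl

instance freeGrade.gradedMonoid : SetLike.GradedMonoid (freeGrade K n) :=
  inferInstanceAs (SetLike.GradedMonoid
    (Submodule.span K (Set.range (FreeAlgebra.ι K (X := Fin n))) ^ · : ℕ → Submodule K _))

theorem FreeAlgebra.ι_mem_freeGrade_one (v : Fin n) : FreeAlgebra.ι K v ∈ freeGrade K n 1 := by
  rw [freeGrade, pow_one]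
  exact Submodule.subset_span ⟨v, rfl⟩

def decomposeFreeGrade : FreeAlgebra K (Fin n) →ₐ[K] ⨁ i, freeGrade K n i :=
  FreeAlgebra.lift K fun v => of (freeGrade K n ·) 1 ⟨_, FreeAlgebra.ι_mem_freeGrade_one K n v⟩

theorem decomposeFreeGrade_of_mem_span {x : FreeAlgebra K (Fin n)}
    (hx : x ∈ Submodule.span K (Set.range (FreeAlgebra.ι K))) :
    decomposeFreeGrade K n x = of (freeGrade K n ·) 1 ⟨x, by rwa [freeGrade, pow_one]⟩ := by
  induction hx using Submodule.span_induction with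
  | mem _ hv =>
    obtain ⟨v, rfl⟩ := hv
    exact FreeAlgebra.lift_ι_apply _ _
  | zero => rw [map_zero]; exact (map_zero _).symm
  | add x y _ _ ihx ihy => rw [map_add, ihx, ihy, ← map_add]; rfl
  | smul c x _ ihx => rw [map_smul, ihx, ← DirectSum.of_smul]; rfl

theorem decomposeFreeGrade_of_mem {i : ℕ} {x : FreeAlgebra K (Fin n)}
    (hx : x ∈ freeGrade K n i) : decomposeFreeGrade K n x = of (freeGrade K n ·) i ⟨x, hx⟩ := by
  induction hx using Submodule.pow_induction_on_left' with
  | algebraMap r => rw [AlgHom.commutes, algebraMap_apply]; rfl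
  | add x y i _ _ ihx ihy => rw [map_add, ihx, ihy, ← map_add]; rfl
  | mem_mul m hm i x _ ihx =>
    rw [map_mul, ihx, decomposeFreeGrade_of_mem_span K n hm, of_mul_of]
    exact of_eq_of_gradedMonoid_eq (Sigma.subtype_ext (add_comm 1 i) rfl)

instance freeGrade.gradedAlgebra : GradedAlgebra (freeGrade K n) :=
  GradedAlgebra.ofAlgHom _ (decomposeFreeGrade K n)
    (by ext; simp [decomposeFreeGrade])
    fun _ x => decomposeFreeGrade_of_mem K n x.2

theorem homComp_eq_map_proj (H : Submodule K (FreeAlgebra K (Fin n))) (g : ℕ) :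
    homComp K n H g = H.map (proj (freeGrade K n) g) :=
  span_homogeneousComponents_eq_map_proj _ H g

variable {K n} {ι : Type*} (b : ι → FreeAlgebra K (Fin n))

theorem top_mul_idealSpan_le : ⊤ * idealSpan K n b ≤ idealSpan K n b := by
  rw [idealSpan, ← Submodule.span_univ, Submodule.span_mul_span, Submodule.span_le]
  rintro _ ⟨a, -, _, ⟨f, g, i, rfl⟩, rfl⟩
  exact Submodule.subset_span ⟨a * f, g, i, by simp only [mul_assoc]⟩

theorem idealSpan_mul_top_le : idealSpan K n b * ⊤ ≤ idealSpan K n b := by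
  rw [idealSpan, ← Submodule.span_univ, Submodule.span_mul_span, Submodule.span_le]
  rintro _ ⟨_, ⟨f, g, i, rfl⟩, a, -, rfl⟩
  exact Submodule.subset_span ⟨f, g * a, i, by simp only [mul_assoc]⟩

end FreeAlgebra

theorem stmt17_general {K : Type*} [Field K] {n m : ℕ}
    (b : Fin m → FreeAlgebra K (Fin n)) :
    ∀ s g h j : ℕ, 1 ≤ g → 2 + s + h ≤ j →
      homComp K n (freePos K n ^ s * idealSpan K n b ^ g * freePos K n ^ h) j =
        freeGrade K n s * homComp K n (idealSpan K n b ^ g) (j - s - h) *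
          freeGrade K n h := by
  intro s g h j hg hj
  obtain ⟨d, rfl⟩ : ∃ d, j = s + d + h := ⟨j - s - h, by omega⟩
  have hg₀ : g ≠ 0 := by omega
  rw [homComp_eq_map_proj, homComp_eq_map_proj, freePos_eq_gradeGE,
    gradeGE_one_pow_mul_mul_pow_eq (freeGrade_eq_pow K n)
      (Submodule.top_mul_pow_le (top_mul_idealSpan_le b) hg₀)
      (Submodule.pow_mul_top_le (idealSpan_mul_top_le b) hg₀),
    map_proj_mul_right, map_proj_mul_left, show s + d + h - s - h = d by omega]

/-- Lemma (Step 2 of Theorem on `L(B)`): for `I = ⟨b₁,…,b_m⟩` with `b_i ∈ F_{≥1}`,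
`s, h ≥ 0`, `g ≥ 1` and `j ≥ 2 + s + h`, one has
`(F_{≥1}^s I^g F_{≥1}^h)_j = F_s (I^g)_{j-s-h} F_h`. -/
theorem stmt17 {K : Type*} [Field K] {n m : ℕ}
    (b : Fin m → FreeAlgebra K (Fin n)) (hb : ∀ i, b i ∈ freePos K n) :
    ∀ s g h j : ℕ, 1 ≤ g → 2 + s + h ≤ j →
      homComp K n (freePos K n ^ s * idealSpan K n b ^ g * freePos K n ^ h) j =
        freeGrade K n s * homComp K n (idealSpan K n b ^ g) (j - s - h) *
          freeGrade K n h :=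
  stmt17_general b
end
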